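/- arXiv:2312.02041 — 4 statements merged into one kernel-verified Lean document; each statement's English description precedes it below -/
import Mathlib

section
/- Let G be the group with presentation ⟨c, l ∣ c·l·c·l⁻¹·c·l⁻³·c·l⁻¹·c·l·c·l² = 1, c² = 1, and the element L = l·c·l³·c·l³·c·l·c is central⟩. Then l = 1 in G, and hence G is cyclic of order at most 2, generated by c. -/
/-- The knot group of the 1-roll spun `(-2,3,7)`-pretzel knot (Nakae presentation, `s = 3`)
with added relations `c² = 1` and the longitude `L = l·c·l³·c·l³·c·l·c` central satisfies
`l = 1`; hence the group generated by `c, l` is generated by `c` alone (cyclic of order ≤ 2). -/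
theorem stmt_0 (G : Type) [Group G] (c l : G)
    (hrel : c * l * c * l⁻¹ * c * (l ^ 3)⁻¹ * c * l⁻¹ * c * l * c * l ^ 2 = 1)
    (hc : c ^ 2 = 1)
    (hL : ∀ x : G,
      (l * c * l ^ 3 * c * l ^ 3 * c * l * c) * x = x * (l * c * l ^ 3 * c * l ^ 3 * c * l * c)) :
    l = 1 ∧ Subgroup.closure ({c, l} : Set G) = Subgroup.closure ({c} : Set G) := by
  have hc1 : c * c = 1 := by rw [← sq]; exact hc
  have hcinv : c⁻¹ = c := inv_eq_of_mul_eq_one_right hc1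
  have hcc : ∀ x : G, c * (c * x) = x := fun x => by rw [← mul_assoc, hc1, one_mul]
  obtain ⟨u, hu⟩ : ∃ x : G, x = c * l * c := ⟨_, rfl⟩
  -- bridge: centrality in u-form
  have hLu : ∀ x : G, (l * u^3 * l^3 * u) * x = x * (l * u^3 * l^3 * u) := by
    intro x
    have h := hL x
    rw [hu]
    simp only [pow_two, pow_three, mul_assoc, mul_inv_rev, inv_inv, inv_one, one_mul, mul_one,
      hcinv, hcc, hc1, inv_mul_cancel_left, mul_inv_cancel_left] at h ⊢
    exact h
  -- bridge: relation in u-form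
  have hrelu : u * l⁻¹ * (u^3)⁻¹ * l⁻¹ * u * l^2 = 1 := by
    have h := hrel
    rw [hu]
    simp only [pow_two, pow_three, mul_assoc, mul_inv_rev, inv_inv, inv_one, one_mul, mul_one,
      hcinv, hcc, hc1, inv_mul_cancel_left, mul_inv_cancel_left] at h ⊢
    exact h
  -- hC1 : L commutes with l, cancelled
  have hC1 : u^3 * l^3 * u * l = l * (u^3 * l^3 * u) := by
    have h := hLu l
    have h2 : l * (u^3 * l^3 * u * l) = l * (l * (u^3 * l^3 * u)) := by
      calc l * (u^3 * l^3 * u * l) = (l * u^3 * l^3 * u) * l := by group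
        _ = l * (l * u^3 * l^3 * u) := h
        _ = l * (l * (u^3 * l^3 * u)) := by group
    exact mul_left_cancel h2
  -- hC3 : c L c = L in u-form
  have hC3 : u * l^3 * u^3 * l = l * u^3 * l^3 * u := by
    have h := hLu c
    have h2 : c * ((l * u^3 * l^3 * u) * c) = l * u^3 * l^3 * u := by
      rw [h, hcc]
    calc u * l^3 * u^3 * l = c * ((l * u^3 * l^3 * u) * c) := by
          rw [hu]
          simp only [pow_two, pow_three, mul_assoc, mul_inv_rev, inv_inv, inv_one, one_mul,
            mul_one, hcinv, hcc, hc1, inv_mul_cancel_left, mul_inv_cancel_left]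
      _ = l * u^3 * l^3 * u := h2
  -- hC4 : l³u³ = u²l³u
  have hC4 : l^3 * u^3 = u^2 * l^3 * u := by
    have h : u * l^3 * u^3 * l = u^3 * l^3 * u * l := hC3.trans (by rw [hC1]; group)
    have h2 : u * (l^3 * u^3 * l) = u * (u^2 * l^3 * u * l) := by
      calc u * (l^3 * u^3 * l) = u * l^3 * u^3 * l := by group
        _ = u^3 * l^3 * u * l := h
        _ = u * (u^2 * l^3 * u * l) := by group
    have h3 := mul_left_cancel h2
    have h4 : (l^3 * u^3) * l = (u^2 * l^3 * u) * l := by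
      calc (l^3 * u^3) * l = l^3 * u^3 * l := by group
        _ = u^2 * l^3 * u * l := h3
        _ = (u^2 * l^3 * u) * l := by group
    exact mul_right_cancel h4
  -- hC4' : conjugate by c : u³l³ = l²u³l
  have hC4' : u^3 * l^3 = l^2 * u^3 * l := by
    calc u^3 * l^3 = c * (l^3 * u^3) * c := by
          rw [hu]
          simp only [pow_two, pow_three, mul_assoc, mul_inv_rev, inv_inv, inv_one, one_mul,
            mul_one, hcinv, hcc, hc1, inv_mul_cancel_left, mul_inv_cancel_left]
      _ = c * (u^2 * l^3 * u) * c := by rw [hC4]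
      _ = l^2 * u^3 * l := by
          rw [hu]
          simp only [pow_two, pow_three, mul_assoc, mul_inv_rev, inv_inv, inv_one, one_mul,
            mul_one, hcinv, hcc, hc1, inv_mul_cancel_left, mul_inv_cancel_left]
  -- hA : u³ l² = l² u³
  have hA : u^3 * l^2 = l^2 * u^3 := by
    have h : (u^3 * l^2) * l = (l^2 * u^3) * l := by
      calc (u^3 * l^2) * l = u^3 * l^3 := by group
        _ = l^2 * u^3 * l := hC4'
        _ = (l^2 * u^3) * l := by group
    exact mul_right_cancel h
  -- hR : l u³ l = u l² u (from the relation)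
  have hR : l * u^3 * l = u * l^2 * u := by
    calc l * u^3 * l
        = (u * l^2 * u * u⁻¹) * (u * l⁻¹ * (u^3)⁻¹ * l⁻¹ * u * l^2)⁻¹ * u := by group
      _ = (u * l^2 * u * u⁻¹) * (1 : G)⁻¹ * u := by rw [hrelu]
      _ = u * l^2 * u := by group
  -- Commute bookkeeping
  have cA : Commute (l^2) (u^3) := hA.symm
  have hK1 : Commute l (u^3 * l^3 * u) := hC1.symm
  have hK2 : Commute l (u^3 * l * u) := by
    have e : (l^2)⁻¹ * (u^3 * l^3 * u) = u^3 * l * u := by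
      calc (l^2)⁻¹ * (u^3 * l^3 * u) = (l^2)⁻¹ * (u^3 * l^2) * (l * u) := by group
        _ = (l^2)⁻¹ * (l^2 * u^3) * (l * u) := by rw [hA]
        _ = u^3 * l * u := by group
    rw [← e]
    exact ((Commute.self_pow l 2).inv_right.mul_right hK1)
  have hK3 : Commute l (u⁻¹ * l^2 * u) := by
    have e : (u^3 * l * u)⁻¹ * (u^3 * l^3 * u) = u⁻¹ * l^2 * u := by group
    rw [← e]
    exact hK2.inv_right.mul_right hK1
  have hK3b : Commute (l^2) (u⁻¹ * l^2 * u) := hK3.pow_left 2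
  have hK4 : Commute (l^2) (u * l^2 * u⁻¹) := by
    show l^2 * (u * l^2 * u⁻¹) = (u * l^2 * u⁻¹) * l^2
    calc l^2 * (u * l^2 * u⁻¹) = u * ((u⁻¹ * l^2 * u) * l^2) * u⁻¹ := by group
      _ = u * (l^2 * (u⁻¹ * l^2 * u)) * u⁻¹ := by rw [hK3b.eq]
      _ = (u * l^2 * u⁻¹) * l^2 := by group
  have hK5 : Commute (l^2) (u * l^2 * u) := by
    show l^2 * (u * l^2 * u) = (u * l^2 * u) * l^2
    calc l^2 * (u * l^2 * u) = l^2 * (l * u^3 * l) := by rw [hR]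
      _ = l * (l^2 * u^3) * l := by group
      _ = l * (u^3 * l^2) * l := by rw [hA]
      _ = (l * u^3 * l) * l^2 := by group
      _ = (u * l^2 * u) * l^2 := by rw [hR]
  have hK6 : Commute (l^2) (u^2) := by
    have e : (u * l^2 * u⁻¹)⁻¹ * (u * l^2 * u) = u^2 := by
      simp only [pow_two, mul_assoc, mul_inv_rev, inv_inv, inv_mul_cancel_left,
        mul_inv_cancel_left]
    rw [← e]
    exact hK4.inv_right.mul_right hK5
  have hK7 : Commute (l^2) u := by
    have e : (u^2)⁻¹ * u^3 = u := by group
    rw [← e]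
    exact hK6.inv_right.mul_right cA
  -- P1 : u³ l = l u²
  have P1 : u^3 * l = l * u^2 := by
    have h : l * (u^3 * l) = l * (l * u^2) := by
      calc l * (u^3 * l) = l * u^3 * l := by group
        _ = u * l^2 * u := hR
        _ = (l^2 * u) * u := by rw [← hK7.eq]
        _ = l * (l * u^2) := by simp only [pow_two, mul_assoc]
    exact mul_left_cancel h
  -- P2 : u² l = l u³
  have P2 : u^2 * l = l * u^3 := by
    have h : l * (u^2 * l) = l * (l * u^3) := by
      calc l * (u^2 * l) = (l * u^2) * l := by group
        _ = (u^3 * l) * l := by rw [← P1]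
        _ = u^3 * l^2 := by simp only [pow_two, mul_assoc]
        _ = l^2 * u^3 := hA
        _ = l * (l * u^3) := by simp only [pow_two, mul_assoc]
    exact mul_left_cancel h
  -- P3 : u l = l u⁻¹
  have P3 : u * l = l * u⁻¹ := by
    have h : (u * l) * u^3 = (l * u⁻¹) * u^3 := by
      calc (u * l) * u^3 = u * (l * u^3) := by group
        _ = u * (u^2 * l) := by rw [← P2]
        _ = u^3 * l := by group
        _ = l * u^2 := P1
        _ = (l * u⁻¹) * u^3 := by group
    exact mul_right_cancel h
  -- P3' : conjugate of P3 by c : l u = u l⁻¹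
  have P3' : l * u = u * l⁻¹ := by
    calc l * u = c * (u * l) * c := by
          rw [hu]
          simp only [pow_two, pow_three, mul_assoc, mul_inv_rev, inv_inv, inv_one, one_mul,
            mul_one, hcinv, hcc, hc1, inv_mul_cancel_left, mul_inv_cancel_left]
      _ = c * (l * u⁻¹) * c := by rw [P3]
      _ = u * l⁻¹ := by
          rw [hu]
          simp only [pow_two, pow_three, mul_assoc, mul_inv_rev, inv_inv, inv_one, one_mul,
            mul_one, hcinv, hcc, hc1, inv_mul_cancel_left, mul_inv_cancel_left]
  -- u² = l²
  have h1 : u * l * u = l := by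
    calc u * l * u = (l * u⁻¹) * u := by rw [P3]
      _ = l := by group
  have h2 : u * l * u = u^2 * l⁻¹ := by
    calc u * l * u = u * (l * u) := by group
      _ = u * (u * l⁻¹) := by rw [P3']
      _ = u^2 * l⁻¹ := by simp only [pow_two, mul_assoc]
  have hu2l2 : u^2 = l^2 := by
    have h3 : l = u^2 * l⁻¹ := h1.symm.trans h2
    calc u^2 = (u^2 * l⁻¹) * l := by group
      _ = l * l := by rw [← h3]
      _ = l^2 := (pow_two l).symm
  -- u = 1
  have hu1 : u = 1 := by
    have h : u * l^3 = l^3 := by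
      calc u * l^3 = (u * l^2) * l := by group
        _ = (u * u^2) * l := by rw [← hu2l2]
        _ = u^3 * l := by group
        _ = l * u^2 := P1
        _ = l * l^2 := by rw [hu2l2]
        _ = l^3 := by group
    have h2 : u * l^3 = 1 * l^3 := by rw [one_mul]; exact h
    exact mul_right_cancel h2
  -- l = 1
  have hclc : c * l * c = 1 := hu.symm.trans hu1
  have hl1 : l = 1 := by
    calc l = c * (c * l * c) * c := by
          rw [show c * (c * l * c) * c = (c * c) * l * (c * c) from by group, hc1]; group
      _ = c * 1 * c := by rw [hclc]
      _ = 1 := by rw [mul_one, hc1]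
  refine ⟨hl1, ?_⟩
  rw [hl1]
  apply le_antisymm
  · refine (Subgroup.closure_le _).2 ?_
    rintro x (rfl | rfl)
    · exact Subgroup.subset_closure rfl
    · exact (Subgroup.closure {c}).one_mem
  · exact Subgroup.closure_mono (by intro x hx; rw [hx]; left; rfl)
end

section
/- Let G be a group with elements c, l satisfying c² = 1 and c·l·c·l⁻¹·c·l⁻ˢ·c·l⁻¹·c·l·c·l^{s-1} = 1 for an integer s, and suppose L := l·c·lˢ·c·lˢ·c·l·c is central in G. Then c·lˢ·c = l^{1-s}·c·lˢ·c·l^{s-1}. -/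
/-- Step 1 of the fundamental group computation: in a group with `c² = 1`, the pretzel-knot
relation `c·l·c·l⁻¹·c·l⁻ˢ·c·l⁻¹·c·l·c·l^(s-1) = 1`, and the longitude
`L = l·c·lˢ·c·lˢ·c·l·c` central, one has `c·lˢ·c = l^(1-s)·c·lˢ·c·l^(s-1)`. -/
theorem stmt_1 (G : Type) [Group G] (c l : G) (s : ℤ)
    (hc : c ^ 2 = 1)
    (hrel : c * l * c * l⁻¹ * c * l ^ (-s) * c * l⁻¹ * c * l * c * l ^ (s - 1) = 1)
    (hL : ∀ x : G,
      (l * c * l ^ s * c * l ^ s * c * l * c) * x = x * (l * c * l ^ s * c * l ^ s * c * l * c)) :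
    c * l ^ s * c = l ^ (1 - s) * c * l ^ s * c * l ^ (s - 1) := by
  have hc1 : c * c = 1 := by rwa [sq] at hc
  have hc2 : ∀ x : G, c * (c * x) = x := fun x => by rw [← mul_assoc, hc1, one_mul]
  have key := hL (c * l⁻¹)
  simp only [mul_assoc, hc2, inv_mul_cancel_left, mul_inv_cancel, mul_one] at key
  -- key : l * (c * (l^s * (c * (l^s * c)))) = l^s * (c * (l^s * (c * (l * c))))
  have h2 : l * c * l ^ s * c * l ^ s = l ^ s * c * l ^ s * c * l := by
    have := congrArg (· * c) key
    simp only [mul_assoc, hc1, mul_one] at this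
    simp only [← mul_assoc] at this
    exact this
  have final : l ^ (1 - s) * c * l ^ s * c * l ^ (s - 1)
      = c * l ^ s * c := by
    calc l ^ (1 - s) * c * l ^ s * c * l ^ (s - 1)
        = l ^ (-s) * (l * c * l ^ s * c * l ^ s) * l ^ (-1 : ℤ) := by group
      _ = l ^ (-s) * (l ^ s * c * l ^ s * c * l) * l ^ (-1 : ℤ) := by rw [h2]
      _ = c * l ^ s * c := by group
  exact final.symm
end

section
/- Let G be a group with elements c, l satisfying c² = 1, the relation c·l·c·l⁻¹·c·l⁻ˢ·c·l⁻¹·c·l·c·l^{s-1} = 1 for an integer s, and suppose L := l·c·lˢ·c·lˢ·c·l·c is central in G. Then L = l³·c·l^{2s-2}·c. -/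
/-- Step 2 of the fundamental group computation: in a group with `c² = 1`, the pretzel-knot
relation, and the longitude `L = l·c·lˢ·c·lˢ·c·l·c` central, one has `L = l³·c·l^(2s-2)·c`. -/
theorem stmt_2 (G : Type) [Group G] (c l : G) (s : ℤ)
    (hc : c ^ 2 = 1)
    (hrel : c * l * c * l⁻¹ * c * l ^ (-s) * c * l⁻¹ * c * l * c * l ^ (s - 1) = 1)
    (hL : ∀ x : G,
      (l * c * l ^ s * c * l ^ s * c * l * c) * x = x * (l * c * l ^ s * c * l ^ s * c * l * c)) :
    l * c * l ^ s * c * l ^ s * c * l * c = l ^ (3 : ℤ) * c * l ^ (2 * s - 2) * c := by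
  have hc1 : c * c = 1 := by rw [← pow_two]; exact hc
  have hci : c⁻¹ = c := inv_eq_of_mul_eq_one_right hc1
  -- Consequence of the relation: c·l⁻ˢ·c = l·c·l⁻¹·c·l^(1-s)·c·l⁻¹·c·l
  have lemA : c * l ^ (-s) * c = l * c * l⁻¹ * c * l ^ (1 - s) * c * l⁻¹ * c * l := by
    calc c * l ^ (-s) * c
        = c * (c⁻¹ * l * c⁻¹ * l⁻¹ * c⁻¹) *
            (c * l * c * l⁻¹ * c * l ^ (-s) * c * l⁻¹ * c * l * c * l ^ (s - 1)) *
            (l ^ (1 - s) * c⁻¹ * l⁻¹ * c⁻¹ * l * c⁻¹) * c := by group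
      _ = c * (c⁻¹ * l * c⁻¹ * l⁻¹ * c⁻¹) * 1 *
            (l ^ (1 - s) * c⁻¹ * l⁻¹ * c⁻¹ * l * c⁻¹) * c := by rw [hrel]
      _ = c * (c * l * c * l⁻¹ * c) * 1 *
            (l ^ (1 - s) * c * l⁻¹ * c * l * c) * c := by rw [hci]
      _ = (c * c) * (l * c * l⁻¹ * c * l ^ (1 - s) * c * l⁻¹ * c * l) * (c * c) := by group
      _ = 1 * (l * c * l⁻¹ * c * l ^ (1 - s) * c * l⁻¹ * c * l) * 1 := by rw [hc1]
      _ = l * c * l⁻¹ * c * l ^ (1 - s) * c * l⁻¹ * c * l := by group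
  -- hence c·lˢ·c = l⁻¹·(c·l·c)·l^(s-1)·(c·l·c)·l⁻¹
  have key : c * l ^ s * c = l⁻¹ * (c * l * c * l ^ (s - 1) * c * l * c) * l⁻¹ := by
    calc c * l ^ s * c
        = (c * c) * (c * l ^ (-s) * c)⁻¹ * (c * c) := by group
      _ = (c * c) * (l * c * l⁻¹ * c * l ^ (1 - s) * c * l⁻¹ * c * l)⁻¹ * (c * c) := by
          rw [lemA]
      _ = 1 * (l * c * l⁻¹ * c * l ^ (1 - s) * c * l⁻¹ * c * l)⁻¹ * 1 := by rw [hc1]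
      _ = l⁻¹ * (c⁻¹ * l * c⁻¹ * l ^ (s - 1) * c⁻¹ * l * c⁻¹) * l⁻¹ := by group
      _ = l⁻¹ * (c * l * c * l ^ (s - 1) * c * l * c) * l⁻¹ := by rw [hci]
  -- L = M·P·M·P·M with M = c·l·c, P = l^(s-1)
  have LA : l * c * l ^ s * c * l ^ s * c * l * c
      = c * l * c * l ^ (s - 1) * (c * l * c) * l ^ (s - 1) * (c * l * c) := by
    calc l * c * l ^ s * c * l ^ s * c * l * c
        = l * (c * l ^ s * c) * (l ^ s * c * l * c) := by group
      _ = l * (l⁻¹ * (c * l * c * l ^ (s - 1) * c * l * c) * l⁻¹) *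
            (l ^ s * c * l * c) := by rw [key]
      _ = c * l * c * l ^ (s - 1) * (c * l * c) * l ^ (s - 1) * (c * l * c) := by group
  -- (MP)² = (PM)²  from centrality against M
  have h2 : ((c * l * c) * l ^ (s - 1)) * ((c * l * c) * l ^ (s - 1))
      = (l ^ (s - 1) * (c * l * c)) * (l ^ (s - 1) * (c * l * c)) := by
    have h := hL (c * l * c)
    rw [LA] at h
    calc ((c * l * c) * l ^ (s - 1)) * ((c * l * c) * l ^ (s - 1))
        = (c * l * c)⁻¹ *
            ((c * l * c) * (c * l * c * l ^ (s - 1) * (c * l * c) * l ^ (s - 1) * (c * l * c))) *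
            (c * l * c)⁻¹ := by group
      _ = (c * l * c)⁻¹ *
            ((c * l * c * l ^ (s - 1) * (c * l * c) * l ^ (s - 1) * (c * l * c)) * (c * l * c)) *
            (c * l * c)⁻¹ := by rw [← h]
      _ = (l ^ (s - 1) * (c * l * c)) * (l ^ (s - 1) * (c * l * c)) := by group
  -- MP = PM  using (MP)³ = (PM)³ from centrality against P
  have h4 : (c * l * c) * l ^ (s - 1) = l ^ (s - 1) * (c * l * c) := by
    have h3 := hL (l ^ (s - 1))
    rw [LA] at h3
    calc (c * l * c) * l ^ (s - 1)
        = ((c * l * c * l ^ (s - 1) * (c * l * c) * l ^ (s - 1) * (c * l * c)) * l ^ (s - 1)) *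
            (((c * l * c) * l ^ (s - 1)) * ((c * l * c) * l ^ (s - 1)))⁻¹ := by group
      _ = (l ^ (s - 1) * (c * l * c * l ^ (s - 1) * (c * l * c) * l ^ (s - 1) * (c * l * c))) *
            (((c * l * c) * l ^ (s - 1)) * ((c * l * c) * l ^ (s - 1)))⁻¹ := by rw [h3]
      _ = (l ^ (s - 1) * (c * l * c * l ^ (s - 1) * (c * l * c) * l ^ (s - 1) * (c * l * c))) *
            ((l ^ (s - 1) * (c * l * c)) * (l ^ (s - 1) * (c * l * c)))⁻¹ := by rw [h2]
      _ = l ^ (s - 1) * (c * l * c) := by group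
  -- L = c·l³·c·l^(2s-2)
  have h5 : l * c * l ^ s * c * l ^ s * c * l * c = c * (l * l * l) * c * l ^ (2 * s - 2) := by
    calc l * c * l ^ s * c * l ^ s * c * l * c
        = c * l * c * l ^ (s - 1) * (c * l * c) * l ^ (s - 1) * (c * l * c) := LA
      _ = (c * l * c) * ((l ^ (s - 1) * (c * l * c)) * (l ^ (s - 1) * (c * l * c))) := by group
      _ = (c * l * c) * (((c * l * c) * l ^ (s - 1)) * ((c * l * c) * l ^ (s - 1))) := by
          rw [← h4]
      _ = ((c * l * c) * (c * l * c)) * ((l ^ (s - 1) * (c * l * c)) * l ^ (s - 1)) := by group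
      _ = ((c * l * c) * (c * l * c)) * (((c * l * c) * l ^ (s - 1)) * l ^ (s - 1)) := by
          rw [← h4]
      _ = c * l * ((c * c) * (l * ((c * c) * (l * (c * (l ^ (s - 1) * l ^ (s - 1))))))) := by
          group
      _ = c * l * (1 * (l * (1 * (l * (c * (l ^ (s - 1) * l ^ (s - 1))))))) := by rw [hc1]
      _ = c * (l * l * l) * c * l ^ (2 * s - 2) := by group
  -- conjugate by c to conclude
  have h6 := hL c
  calc l * c * l ^ s * c * l ^ s * c * l * c
      = ((l * c * l ^ s * c * l ^ s * c * l * c) * c) * c⁻¹ := by group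
    _ = (c * (l * c * l ^ s * c * l ^ s * c * l * c)) * c⁻¹ := by rw [h6]
    _ = (c * (c * (l * l * l) * c * l ^ (2 * s - 2))) * c⁻¹ := by rw [h5]
    _ = (c * c) * ((l * l * l) * (c * (l ^ (2 * s - 2) * c⁻¹))) := by group
    _ = (c * c) * ((l * l * l) * (c * (l ^ (2 * s - 2) * c))) := by rw [hci]
    _ = 1 * ((l * l * l) * (c * (l ^ (2 * s - 2) * c))) := by rw [hc1]
    _ = l ^ (3 : ℤ) * c * l ^ (2 * s - 2) * c := by
        rw [show l ^ (3 : ℤ) = l * l * l by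
          rw [show (3:ℤ) = 1 + 1 + 1 by norm_num, zpow_add, zpow_add, zpow_one]]
        group
end

section
/- Let G be a group with elements c, l satisfying c² = 1, and suppose L := l·c·lˢ·c·lˢ·c·l·c is central and equals l³·c·l^{2s-2}·c for an integer s. Then l^{2s-5}·c = c·l^{2s-5}. In particular for s = 3, l commutes with c. -/
/-- Step 3 of the fundamental group computation: if `c² = 1` and the central element
`L = l·c·lˢ·c·lˢ·c·l·c` equals `l³·c·l^(2s-2)·c`, then `l^(2s-5)·c = c·l^(2s-5)`;
in particular, for `s = 3`, `l` commutes with `c`. -/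
theorem stmt_3 (G : Type) [Group G] (c l : G) (s : ℤ)
    (hc : c ^ 2 = 1)
    (hL : ∀ x : G,
      (l * c * l ^ s * c * l ^ s * c * l * c) * x = x * (l * c * l ^ s * c * l ^ s * c * l * c))
    (hLeq : l * c * l ^ s * c * l ^ s * c * l * c = l ^ (3 : ℤ) * c * l ^ (2 * s - 2) * c) :
    l ^ (2 * s - 5) * c = c * l ^ (2 * s - 5) ∧ (s = 3 → l * c = c * l) := by
  have hcc : c * c = 1 := by rw [← pow_two]; exact hc
  have h := hL (c * l ^ (-3 : ℤ))
  rw [hLeq] at h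
  have h2 : l ^ (3:ℤ) * c * l ^ (2*s-2) * l ^ (-3:ℤ) = l ^ (2*s-2) * c := by
    calc l ^ (3:ℤ) * c * l ^ (2*s-2) * l ^ (-3:ℤ)
        = l ^ (3:ℤ) * c * l ^ (2*s-2) * (c * (c * l ^ (-3:ℤ))) := by
          rw [← mul_assoc c c, hcc, one_mul]
      _ = c * l ^ (-3:ℤ) * (l ^ (3:ℤ) * c * l ^ (2*s-2) * c) := by
          rw [← h]; group
      _ = c * (c * l ^ (2*s-2) * c) := by
          have e : l ^ (-3:ℤ) * (l ^ (3:ℤ) * c * l ^ (2*s-2) * c) = c * l ^ (2*s-2) * c := by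
            group
          rw [mul_assoc, e]
      _ = l ^ (2*s-2) * c := by
          rw [← mul_assoc, ← mul_assoc, hcc, one_mul]
  have h3 : c * l ^ (2*s-2) * l ^ (-3:ℤ) = l ^ (-3:ℤ) * (l ^ (2*s-2) * c) := by
    rw [← h2]; group
  rw [mul_assoc, ← zpow_add, ← mul_assoc, ← zpow_add] at h3
  have h3' : c * l ^ (2*s-5) = l ^ (2*s-5) * c := by
    rw [show (2*s-5:ℤ) = 2*s-2 + -3 by ring]
    exact h3.trans (by rw [show (-3 + (2*s-2):ℤ) = 2*s-2 + -3 by ring])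
  refine ⟨h3'.symm, fun hs => ?_⟩
  have := h3'.symm
  rw [hs] at this
  norm_num at this
  simpa using this
end
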